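/- arXiv:1510.04364 — 5 statements merged into one kernel-verified Lean document; each statement's English description precedes it below -/
import Mathlib

section
/- Let α, β, δ > 0 with β > δ. Set D = βα + βδ + δ², I₁* = α(β−δ)/D, I₂* = δ(β−δ)/D, and S* = 1 − I₁* − I₂*. Then (I₁*, I₂*) is a steady state of the diffusion-free phenomenological SIS system, i.e. (β/(1+I₂*))·S*·I₁* − δ·I₁* = 0 and δ·I₁* − α·I₂* = 0 (and consequently −(β/(1+I₂*))·S*·I₁* + α·I₂* = 0). -/
theorem phenomenological_steady_state
    (α β δ : ℝ) (hα : 0 < α) (hβ : 0 < β) (hδ : 0 < δ) (hβδ : β > δ)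
    (D : ℝ) (hD : D = β * α + β * δ + δ ^ 2)
    (I₁ I₂ S : ℝ)
    (hI₁ : I₁ = α * (β - δ) / D)
    (hI₂ : I₂ = δ * (β - δ) / D)
    (hS : S = 1 - I₁ - I₂) :
    (β / (1 + I₂)) * S * I₁ - δ * I₁ = 0 ∧
    δ * I₁ - α * I₂ = 0 ∧
    -((β / (1 + I₂)) * S * I₁) + α * I₂ = 0 := by
  have hDpos : 0 < D := by rw [hD]; nlinarith
  have hDne : D ≠ 0 := ne_of_gt hDpos
  have hI₂pos : 0 ≤ I₂ := by
    rw [hI₂]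
    apply div_nonneg _ (le_of_lt hDpos)
    nlinarith
  have h1 : (1 : ℝ) + I₂ ≠ 0 := by positivity
  have hkey : β * S = δ * (1 + I₂) := by
    rw [hS, hI₁, hI₂, hD]
    field_simp
    ring
  have hrate : (β / (1 + I₂)) * S = δ := by
    rw [div_mul_eq_mul_div, hkey]; field_simp
  have h2 : δ * I₁ - α * I₂ = 0 := by
    rw [hI₁, hI₂]; field_simp; ring
  have h3 : (β / (1 + I₂)) * S * I₁ - δ * I₁ = 0 := by
    rw [hrate]; ring
  exact ⟨h3, h2, by linarith⟩
end

section
/- Let α, β, δ > 0 with β > δ and β > α. Let J₁₁ = α(δ−β)/(α+2δ), J₁₂ = α(α²−β²)/(β(α+2δ)), J₂₁ = δ, J₂₂ = −α. Then the determinant J₁₁J₂₂ − J₁₂J₂₁ is strictly positive. -/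
theorem phenomenological_det_positive
    (α β δ : ℝ) (hα : 0 < α) (hβ : 0 < β) (hδ : 0 < δ)
    (hβδ : β > δ) (hβα : β > α)
    (J₁₁ J₁₂ J₂₁ J₂₂ : ℝ)
    (hJ₁₁ : J₁₁ = α * (δ - β) / (α + 2 * δ))
    (hJ₁₂ : J₁₂ = α * (α ^ 2 - β ^ 2) / (β * (α + 2 * δ)))
    (hJ₂₁ : J₂₁ = δ)
    (hJ₂₂ : J₂₂ = -α) :
    0 < J₁₁ * J₂₂ - J₁₂ * J₂₁ := by
  rw [hJ₁₁, hJ₁₂, hJ₂₁, hJ₂₂]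
  have h1 : 0 < α + 2 * δ := by linarith
  rw [div_mul_eq_mul_div, div_mul_eq_mul_div, div_sub_div _ _ (ne_of_gt h1) (ne_of_gt (mul_pos hβ h1))]
  apply div_pos _ (mul_pos h1 (mul_pos hβ h1))
  nlinarith [mul_pos hα hδ, mul_pos hα hβ, sq_nonneg (β - α), mul_pos (mul_pos hα hδ) (sub_pos.mpr hβδ), mul_pos (mul_pos hα hδ) (mul_pos (sub_pos.mpr hβα) (by linarith : (0:ℝ) < β + α)), mul_pos (mul_pos (mul_pos hα hα) h1) (sub_pos.mpr hβδ)]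
end

section
/- Let α, β, δ > 0 with β > δ. Set D = βα + βδ + δ², I₁* = α(β−δ)/D, I₂* = δ(β−δ)/D. Define F(I₁, I₂) = β(1 − I₁ − I₂)I₁/(1 + I₂) − δI₁. Then the partial derivative of F with respect to I₁ at the point (I₁*, I₂*), i.e. the derivative at I₁* of the map I₁ ↦ F(I₁, I₂*), equals α(δ−β)/(α+2δ). -/
/-! At an equilibrium with `I₁ ≠ 0` the bracket `β (1 - I₁ - I₂) - δ (1 + I₂)` vanishes, so the
`I₁`-derivative `β (1 - 2 I₁ - I₂) / (1 + I₂) - δ` collapses to `-β I₁ / (1 + I₂)`. At the endemic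
equilibrium `1 + I₂ = β (α + 2δ) / D`, and the `D` and `β` cancel. -/

theorem hasDerivAt_incidence_sub_onset (β δ y x : ℝ) :
    HasDerivAt (fun x => β * (1 - x - y) * x / (1 + y) - δ * x)
      (β * (1 - 2 * x - y) / (1 + y) - δ) x := by
  have hnum : HasDerivAt (fun x => β * (1 - x - y) * x) (β * (1 - 2 * x - y)) x :=
    ((((hasDerivAt_id' x).const_sub 1).sub_const y).const_mul β).mul (hasDerivAt_id' x)
      |>.congr_deriv (by ring)
  exact (hnum.div_const (1 + y)).sub ((hasDerivAt_id' x).const_mul δ) |>.congr_deriv (by ring)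

theorem incidence_slope_eq_of_balance {β δ x y : ℝ} (hbal : β * (1 - x - y) = δ * (1 + y))
    (hy : 1 + y ≠ 0) :
    β * (1 - 2 * x - y) / (1 + y) - δ = -(β * x) / (1 + y) := by
  field_simp
  linear_combination hbal

section EndemicEquilibrium

variable {α β δ D : ℝ} (hD : D = β * α + β * δ + δ ^ 2) (hD0 : D ≠ 0)
include hD hD0

theorem one_add_endemic_I₂ : 1 + δ * (β - δ) / D = β * (α + 2 * δ) / D := by
  field_simp
  rw [hD]
  ring

theorem endemic_balance :
    β * (1 - α * (β - δ) / D - δ * (β - δ) / D) = δ * (1 + δ * (β - δ) / D) := by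
  field_simp
  rw [hD]
  ring

end EndemicEquilibrium

theorem phenomenological_J11_partial_derivative_general
    (α β δ : ℝ) (hα : 0 < α) (hβ : 0 < β) (hδ : 0 < δ)
    (D : ℝ) (hD : D = β * α + β * δ + δ ^ 2)
    (I₁ I₂ : ℝ)
    (hI₁ : I₁ = α * (β - δ) / D)
    (hI₂ : I₂ = δ * (β - δ) / D)
    (F : ℝ → ℝ → ℝ)
    (hF : ∀ x y, F x y = β * (1 - x - y) * x / (1 + y) - δ * x) :
    HasDerivAt (fun x => F x I₂) (α * (δ - β) / (α + 2 * δ)) I₁ := by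
  have hD0 : D ≠ 0 := by rw [hD]; positivity
  have h1I₂ : 1 + I₂ = β * (α + 2 * δ) / D := hI₂ ▸ one_add_endemic_I₂ hD hD0
  have hbal : β * (1 - I₁ - I₂) = δ * (1 + I₂) := hI₁ ▸ hI₂ ▸ endemic_balance hD hD0
  have hslope : β * (1 - 2 * I₁ - I₂) / (1 + I₂) - δ = α * (δ - β) / (α + 2 * δ) := by
    rw [incidence_slope_eq_of_balance hbal (by rw [h1I₂]; positivity), h1I₂, hI₁]
    field_simp
    ring
  rw [funext fun x => hF x I₂, ← hslope]
  exact hasDerivAt_incidence_sub_onset β δ I₂ I₁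

theorem phenomenological_J11_partial_derivative
    (α β δ : ℝ) (hα : 0 < α) (hβ : 0 < β) (hδ : 0 < δ) (hβδ : β > δ)
    (D : ℝ) (hD : D = β * α + β * δ + δ ^ 2)
    (I₁ I₂ : ℝ)
    (hI₁ : I₁ = α * (β - δ) / D)
    (hI₂ : I₂ = δ * (β - δ) / D)
    (F : ℝ → ℝ → ℝ)
    (hF : ∀ x y, F x y = β * (1 - x - y) * x / (1 + y) - δ * x) :
    HasDerivAt (fun x => F x I₂) (α * (δ - β) / (α + 2 * δ)) I₁ :=
  phenomenological_J11_partial_derivative_general α β δ hα hβ hδ D hD I₁ I₂ hI₁ hI₂ F hF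
end

section
/- Let r, β, γ, K, D_S, D_I > 0 and c ≥ 0 satisfy γ < β < r + γ. Define J₁₁ = −r + β − γ²/β, J₁₂ = −γ²/β, J₂₁ = (β−γ)²/β, J₂₂ = −γ(β−γ)/β, D̂₁₁ = D_S, D̂₁₂ = cK(r−β+γ)/r, D̂₂₁ = 0, D̂₂₂ = D_I, and Z = −D_S(β−γ)γ/β − D_I·r + D_I·β − D_I·γ²/β − ((β−γ)²/β)·cK(r−(β−γ))/r. If Z > 0 and Z² ≥ 4·D_S·D_I·γ(β−γ)(r−β+γ)/β, then all six Turing diffusive-instability conditions hold: (i) J₁₁ + J₂₂ < 0; (ii) J₁₁J₂₂ − J₁₂J₂₁ > 0; (iii) D̂₁₁D̂₂₂ − D̂₁₂D̂₂₁ > 0; (iv) (D̂₁₁ − D̂₂₂)² + 4D̂₁₂D̂₂₁ ≥ 0; (v) D̂₁₁J₂₂ + D̂₂₂J₁₁ − D̂₁₂J₂₁ − D̂₂₁J₁₂ > 0; (vi) (D̂₁₁J₂₂ + D̂₂₂J₁₁ − D̂₁₂J₂₁ − D̂₂₁J₁₂)² − 4(D̂₁₁D̂₂₂ − D̂₁₂D̂₂₁)(J₁₁J₂₂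 − J₁₂J₂₁) ≥ 0. -/
theorem berres_turing_instability
    (r β γ K DS DI c : ℝ)
    (hr : 0 < r) (hβ : 0 < β) (hγ : 0 < γ) (hK : 0 < K)
    (hDS : 0 < DS) (hDI : 0 < DI) (hc : 0 ≤ c)
    (h1 : γ < β) (h2 : β < r + γ)
    (J₁₁ J₁₂ J₂₁ J₂₂ D₁₁ D₁₂ D₂₁ D₂₂ Z : ℝ)
    (hJ₁₁ : J₁₁ = -r + β - γ ^ 2 / β)
    (hJ₁₂ : J₁₂ = -(γ ^ 2 / β))
    (hJ₂₁ : J₂₁ = (β - γ) ^ 2 / β)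
    (hJ₂₂ : J₂₂ = -(γ * (β - γ) / β))
    (hD₁₁ : D₁₁ = DS)
    (hD₁₂ : D₁₂ = c * K * (r - β + γ) / r)
    (hD₂₁ : D₂₁ = 0)
    (hD₂₂ : D₂₂ = DI)
    (hZ : Z = -(DS * (β - γ) * γ / β) - DI * r + DI * β - DI * (γ ^ 2 / β)
      - ((β - γ) ^ 2 / β) * (c * K * (r - (β - γ)) / r))
    (hZpos : 0 < Z)
    (hZsq : Z ^ 2 ≥ 4 * DS * DI * γ * (β - γ) * (r - β + γ) / β) :
    J₁₁ + J₂₂ < 0 ∧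
    0 < J₁₁ * J₂₂ - J₁₂ * J₂₁ ∧
    0 < D₁₁ * D₂₂ - D₁₂ * D₂₁ ∧
    0 ≤ (D₁₁ - D₂₂) ^ 2 + 4 * D₁₂ * D₂₁ ∧
    0 < D₁₁ * J₂₂ + D₂₂ * J₁₁ - D₁₂ * J₂₁ - D₂₁ * J₁₂ ∧
    0 ≤ (D₁₁ * J₂₂ + D₂₂ * J₁₁ - D₁₂ * J₂₁ - D₂₁ * J₁₂) ^ 2
      - 4 * (D₁₁ * D₂₂ - D₁₂ * D₂₁) * (J₁₁ * J₂₂ - J₁₂ * J₂₁) := by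
  have hβ' : β ≠ 0 := ne_of_gt hβ
  have hr' : r ≠ 0 := ne_of_gt hr
  have htr : J₁₁ + J₂₂ = β - γ - r := by
    rw [hJ₁₁, hJ₂₂]; field_simp; ring
  have hdet : J₁₁ * J₂₂ - J₁₂ * J₂₁ = γ * (β - γ) * (r - β + γ) / β := by
    rw [hJ₁₁, hJ₁₂, hJ₂₁, hJ₂₂]; field_simp; ring
  have hsum : D₁₁ * J₂₂ + D₂₂ * J₁₁ - D₁₂ * J₂₁ - D₂₁ * J₁₂ = Z := by
    rw [hD₁₁, hD₁₂, hD₂₁, hD₂₂, hJ₁₁, hJ₂₁, hJ₂₂, hZ]; field_simp; ring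
  refine ⟨?_, ?_, ?_, ?_, ?_, ?_⟩
  · rw [htr]; linarith
  · rw [hdet]
    apply div_pos _ hβ
    exact mul_pos (mul_pos hγ (sub_pos.2 h1)) (by linarith)
  · rw [hD₁₁, hD₂₁, hD₂₂]; nlinarith
  · rw [hD₂₁]; nlinarith [sq_nonneg (D₁₁ - D₂₂)]
  · rw [hsum]; exact hZpos
  · rw [hsum, hD₁₁, hD₂₁, hD₂₂, hdet]
    have : 4 * (DS * DI - D₁₂ * 0) * (γ * (β - γ) * (r - β + γ) / β)
        = 4 * DS * DI * γ * (β - γ) * (r - β + γ) / β := by ring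
    rw [this]; linarith
end

section
/- Let β > γ > 0, Λ > 0, D_S > 0, D_I > 0, and c ≥ 0. Define J₁₁ = −(β−γ)²/β, J₁₂ = −γ²/β, J₂₁ = (β−γ)²/β, J₂₂ = −γ(β−γ)/β, D̂₁₁ = D_S, D̂₁₂ = cΛ/(β−γ), D̂₂₁ = 0, D̂₂₂ = D_I. Then D̂₁₁J₂₂ + D̂₂₂J₁₁ − D̂₁₂J₂₁ − D̂₂₁J₁₂ < 0; that is, the Turing condition D̂₁₁J₂₂ + D̂₂₂J₁₁ − D̂₁₂J₂₁ − D̂₂₁J₁₂ > 0 fails, so the constant-recruitment cross-diffusion model does not support Turing's diffusive instability. -/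
theorem constant_recruitment_no_turing
    (β γ Λ DS DI c : ℝ)
    (hγ : 0 < γ) (hβγ : γ < β) (hΛ : 0 < Λ)
    (hDS : 0 < DS) (hDI : 0 < DI) (hc : 0 ≤ c)
    (J₁₁ J₁₂ J₂₁ J₂₂ D₁₁ D₁₂ D₂₁ D₂₂ : ℝ)
    (hJ₁₁ : J₁₁ = -((β - γ) ^ 2 / β))
    (hJ₁₂ : J₁₂ = -(γ ^ 2 / β))
    (hJ₂₁ : J₂₁ = (β - γ) ^ 2 / β)
    (hJ₂₂ : J₂₂ = -(γ * (β - γ) / β))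
    (hD₁₁ : D₁₁ = DS)
    (hD₁₂ : D₁₂ = c * Λ / (β - γ))
    (hD₂₁ : D₂₁ = 0)
    (hD₂₂ : D₂₂ = DI) :
    D₁₁ * J₂₂ + D₂₂ * J₁₁ - D₁₂ * J₂₁ - D₂₁ * J₁₂ < 0 ∧
    ¬ (D₁₁ * J₂₂ + D₂₂ * J₁₁ - D₁₂ * J₂₁ - D₂₁ * J₁₂ > 0) := by
  have hβ : 0 < β := hγ.trans hβγ
  have hbg : 0 < β - γ := sub_pos.mpr hβγ
  have h : D₁₁ * J₂₂ + D₂₂ * J₁₁ - D₁₂ * J₂₁ - D₂₁ * J₁₂ < 0 := by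
    subst hJ₁₁ hJ₁₂ hJ₂₁ hJ₂₂ hD₁₁ hD₁₂ hD₂₁ hD₂₂
    have h1 : 0 < D₁₁ * (γ * (β - γ) / β) := by positivity
    have h2 : 0 < D₂₂ * ((β - γ) ^ 2 / β) := by positivity
    have h3 : 0 ≤ c * Λ / (β - γ) * ((β - γ) ^ 2 / β) := by positivity
    linarith
  exact ⟨h, not_lt.mpr h.le⟩
end
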